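/- Fix ε ∈ {1, −1}. Let ξ, η ∈ ℝ³ and define the normal vectors of the surface {(ζ, ζ₁ζ₂, ζ₁²+εζ₃²)} ⊂ ℝ⁵ at ζ by n¹_ζ = (ζ₂, ζ₁, 0, −1, 0) and n²_ζ = (2ζ₁, 0, 2εζ₃, 0, −1). Then n¹_ξ, n²_ξ, n¹_η, n²_η are linearly dependent over ℝ if and only if (ξ₁ = η₁ and ξ₂ = η₂) or (ξ₁ = η₁ and ξ₃ = η₃). -/
import Mathlib


/-- Normal vector n¹ of the surface {(ζ, ζ₁ζ₂, ζ₁²+εζ₃²)} at ζ. -/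
noncomputable def n1d (ζ : Fin 3 → ℝ) : Fin 5 → ℝ := ![ζ 1, ζ 0, 0, -1, 0]

/-- Normal vector n² of the surface {(ζ, ζ₁ζ₂, ζ₁²+εζ₃²)} at ζ. -/
noncomputable def n2d (ε : ℝ) (ζ : Fin 3 → ℝ) : Fin 5 → ℝ :=
  ![2 * ζ 0, 0, 2 * ε * ζ 2, 0, -1]

theorem stmt3 (ε : ℝ) (hε : ε = 1 ∨ ε = -1) (ξ η : Fin 3 → ℝ) :
    (∃ k₁ k₂ l₁ l₂ : ℝ, ¬(k₁ = 0 ∧ k₂ = 0 ∧ l₁ = 0 ∧ l₂ = 0) ∧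
      k₁ • n1d ξ + k₂ • n2d ε ξ + l₁ • n1d η + l₂ • n2d ε η = 0)
    ↔ ((ξ 0 = η 0 ∧ ξ 1 = η 1) ∨ (ξ 0 = η 0 ∧ ξ 2 = η 2)) := by
  have hε0 : ε ≠ 0 := by rcases hε with h | h <;> rw [h] <;> norm_num
  constructor
  · rintro ⟨k₁, k₂, l₁, l₂, hne, heq⟩
    have h0 := congrFun heq 0
    have h1 := congrFun heq 1
    have h2 := congrFun heq 2
    have h3 := congrFun heq 3
    have h4 := congrFun heq 4
    simp [n1d, n2d] at h0 h1 h2 h3 h4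
    have hl1 : l₁ = -k₁ := by linarith
    have hl2 : l₂ = -k₂ := by linarith
    subst hl1 hl2
    have hk : k₁ ≠ 0 ∨ k₂ ≠ 0 := by
      by_contra h
      push_neg at h
      exact hne ⟨h.1, h.2, by rw [h.1]; ring, by rw [h.2]; ring⟩
    have e1 : k₁ * (ξ 0 - η 0) = 0 := by linarith
    have e2 : k₂ * (ξ 2 - η 2) = 0 := by
      have : ε * (2 * (k₂ * (ξ 2 - η 2))) = 0 := by linarith
      have := mul_eq_zero.mp this
      rcases this with h | h
      · exact absurd h hε0
      · linarith
    have e0 : k₁ * (ξ 1 - η 1) + 2 * k₂ * (ξ 0 - η 0) = 0 := by linarith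
    rcases hk with hk1 | hk2
    · have hx0 : ξ 0 = η 0 := by
        rcases mul_eq_zero.mp e1 with h | h
        · exact absurd h hk1
        · linarith
      have hx1 : ξ 1 = η 1 := by
        have : k₁ * (ξ 1 - η 1) = 0 := by rw [hx0] at e0; linarith
        rcases mul_eq_zero.mp this with h | h
        · exact absurd h hk1
        · linarith
      exact Or.inl ⟨hx0, hx1⟩
    · have hx2 : ξ 2 = η 2 := by
        rcases mul_eq_zero.mp e2 with h | h
        · exact absurd h hk2
        · linarith
      by_cases hk1 : k₁ = 0
      · subst hk1
        have hx0 : ξ 0 = η 0 := by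
          have : 2 * k₂ * (ξ 0 - η 0) = 0 := by linarith
          rcases mul_eq_zero.mp this with h | h
          · rcases mul_eq_zero.mp h with h | h
            · norm_num at h
            · exact absurd h hk2
          · linarith
        exact Or.inr ⟨hx0, hx2⟩
      · have hx0 : ξ 0 = η 0 := by
          rcases mul_eq_zero.mp e1 with h | h
          · exact absurd h hk1
          · linarith
        have hx1 : ξ 1 = η 1 := by
          have : k₁ * (ξ 1 - η 1) = 0 := by rw [hx0] at e0; linarith
          rcases mul_eq_zero.mp this with h | h
          · exact absurd h hk1
          · linarith
        exact Or.inl ⟨hx0, hx1⟩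
  · rintro (⟨h01, h1⟩ | ⟨h01, h2⟩)
    · refine ⟨1, 0, -1, 0, by norm_num, ?_⟩
      funext i
      fin_cases i <;> simp [n1d, n2d, h01, h1]
    · refine ⟨0, 1, 0, -1, by norm_num, ?_⟩
      funext i
      fin_cases i <;> simp [n1d, n2d, h01, h2]
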